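/- arXiv:2010.07053 — 4 statements merged into one kernel-verified Lean document; each statement's English description precedes it below -/
import Mathlib

section
/- With Δ as above, the polytope P_Δ = ∩_{α∈Δ(1)} {I : ⟨I, e(α)⟩ ≥ −1} in (ℝⁿ)* is compact. -/
/-!
Completeness of the fan writes every `x` as a nonnegative combination `∑ cₜ eₜ` of the ray
generators of one maximal cone, so on `P_Δ` the functional `⟨·, x⟩` is bounded below by
`-∑ cₜ`. Applied to `x = ±eᵢ` this bounds every coordinate on both sides, and `P_Δ`, an
intersection of closed half-spaces, is then closed and bounded.
-/

/-- A complete fan in `ℝⁿ` with smooth maximal cones, recorded via its maximal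
cones: each maximal cone `σ` is given by generators `gen σ t` forming a
`ℤ`-basis of `ℤⁿ`, and every point of `ℝⁿ` lies in the cone spanned by the
generators of some maximal cone.  Since the fan is complete, its primitive ray
generators are exactly the vectors `gen σ t`. -/
structure SmoothCompleteFan (n : ℕ) where
  ι : Type
  fin : Fintype ι
  gen : ι → Fin n → Fin n → ℤ
  smooth : ∀ σ : ι, ∃ b : Module.Basis (Fin n) ℤ (Fin n → ℤ), ∀ t, b t = gen σ t
  complete : ∀ x : Fin n → ℝ, ∃ σ : ι, ∃ c : Fin n → ℝ, (∀ t, 0 ≤ c t) ∧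
    x = ∑ t, c t • (fun j => ((gen σ t j : ℝ)))

open Bornology Matrix

theorem isBounded_of_forall_bddBelow_dotProduct {ι : Type*} [Fintype ι] [DecidableEq ι]
    {S : Set (ι → ℝ)} (h : ∀ x : ι → ℝ, BddBelow ((· ⬝ᵥ x) '' S)) : IsBounded S := by
  refine forall_isBounded_image_eval_iff.1 fun i => isBounded_iff_bddBelow_bddAbove.2 ⟨?_, ?_⟩
  · obtain ⟨C, hC⟩ := h (Pi.single i 1)
    refine ⟨C, Set.forall_mem_image.2 fun I hI => ?_⟩
    simpa [dotProduct_single] using hC (Set.mem_image_of_mem _ hI)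
  · obtain ⟨C, hC⟩ := h (Pi.single i (-1))
    refine ⟨-C, Set.forall_mem_image.2 fun I hI => ?_⟩
    have := hC (Set.mem_image_of_mem _ hI)
    simp only [dotProduct_single, mul_neg, mul_one] at this
    simpa using neg_le_neg this

theorem neg_sum_le_dotProduct_sum_smul {ι τ : Type*} [Fintype ι] [Fintype τ]
    {w : τ → ι → ℝ} {c : τ → ℝ} (hc : ∀ t, 0 ≤ c t) {I : ι → ℝ}
    (hI : ∀ t, -1 ≤ I ⬝ᵥ w t) : -∑ t, c t ≤ I ⬝ᵥ ∑ t, c t • w t := by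
  simp only [dotProduct_sum, dotProduct_smul, smul_eq_mul, ← Finset.sum_neg_distrib]
  exact Finset.sum_le_sum fun t _ => by nlinarith [hc t, hI t]

/-- The polytope `P_Δ = ∩_{rays α} {I : ⟨I, e(α)⟩ ≥ -1}` of a complete fan with
smooth maximal cones is compact. -/
theorem stmt3 (n : ℕ) (Δ : SmoothCompleteFan n) :
    IsCompact {I : Fin n → ℝ | ∀ (σ : Δ.ι) (t : Fin n), -1 ≤ ∑ j, I j * Δ.gen σ t j} := by
  refine Metric.isCompact_of_isClosed_isBounded ?_ ?_
  · simp only [Set.ofPred_forall]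
    exact isClosed_iInter fun σ => isClosed_iInter fun t =>
      isClosed_le continuous_const (by fun_prop)
  · refine isBounded_of_forall_bddBelow_dotProduct fun x => ?_
    obtain ⟨σ, c, hc, rfl⟩ := Δ.complete x
    exact ⟨-∑ t, c t, Set.forall_mem_image.2 fun I hI =>
      neg_sum_le_dotProduct_sum_smul hc (hI σ)⟩
end

section
/- Let V be an n-dimensional ℂ-vector space and F ⊆ V a subspace with dim F > k. If x ∈ Λ^k V satisfies x ∧ y = 0 for all y ∈ F, then x = 0. -/
open ExteriorAlgebra

open CliffordAlgebra in
lemma contract_mem_pow {V : Type*} [AddCommGroup V] [Module ℂ V]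
    (k : ℕ) (x : ExteriorAlgebra ℂ V) (hx : x ∈ ⋀[ℂ]^(k+1) V) (d : Module.Dual ℂ V) :
    contractRight (Q := (0 : QuadraticForm ℂ V)) x d ∈ ⋀[ℂ]^k V := by
  induction k generalizing x with
  | zero =>
    replace hx : x ∈ LinearMap.range (ι ℂ : V →ₗ[ℂ] ExteriorAlgebra ℂ V) ^ (0 + 1) := hx
    rw [zero_add, pow_one] at hx
    obtain ⟨m, rfl⟩ := hx
    rw [contractRight_ι]
    show _ ∈ LinearMap.range (ι ℂ : V →ₗ[ℂ] ExteriorAlgebra ℂ V) ^ 0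
    rw [pow_zero, Submodule.mem_one]
    exact ⟨d m, rfl⟩
  | succ k ih =>
    replace hx : x ∈ LinearMap.range (ι ℂ : V →ₗ[ℂ] ExteriorAlgebra ℂ V) ^ (k + 1 + 1) := hx
    rw [pow_succ] at hx
    refine Submodule.mul_induction_on hx ?_ ?_
    · rintro a ha b ⟨m, rfl⟩
      rw [contractRight_mul_ι]
      refine Submodule.sub_mem _ (Submodule.smul_mem _ _ ha) ?_
      show _ ∈ LinearMap.range (ι ℂ : V →ₗ[ℂ] ExteriorAlgebra ℂ V) ^ (k + 1)
      rw [pow_succ]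
      exact Submodule.mul_mem_mul (ih a ha) ⟨m, rfl⟩
    · intro a b ha hb
      rw [map_add, LinearMap.add_apply]
      exact Submodule.add_mem _ ha hb

open CliffordAlgebra in
/-- Let `V` be an `n`-dimensional complex vector space and `F ⊆ V` a subspace
with `dim F > k`.  If `x ∈ Λ^k V` satisfies `x ∧ y = 0` for all `y ∈ F`, then
`x = 0`. -/
theorem stmt5 (n k : ℕ)
    (V : Type*) [AddCommGroup V] [Module ℂ V] [FiniteDimensional ℂ V]
    (hV : Module.finrank ℂ V = n)
    (F : Submodule ℂ V) (hF : k < Module.finrank ℂ F)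
    (x : ExteriorAlgebra ℂ V) (hx : x ∈ ⋀[ℂ]^k V)
    (h : ∀ y ∈ F, x * ι ℂ y = 0) :
    x = 0 := by
  clear hV
  induction k generalizing F x with
  | zero =>
    replace hx : x ∈ LinearMap.range (ι ℂ : V →ₗ[ℂ] ExteriorAlgebra ℂ V) ^ 0 := hx
    rw [pow_zero, Submodule.mem_one] at hx
    obtain ⟨r, rfl⟩ := hx
    obtain ⟨⟨y, hy⟩, hy0⟩ : ∃ v : F, v ≠ 0 := by
      have : 0 < Module.finrank ℂ F := hF
      rw [Module.finrank_pos_iff] at this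
      exact exists_ne 0
    have h0 := h y hy
    rw [Algebra.algebraMap_eq_smul_one, smul_mul_assoc, one_mul] at h0
    rcases smul_eq_zero.mp h0 with hr | h0
    · rw [hr, map_zero]
    · exact absurd ((ι_eq_zero_iff (R := ℂ) y).mp h0)
        (by simpa [Submodule.mk_eq_zero] using hy0)
  | succ k ih =>
    have key : ∀ d : Module.Dual ℂ V, ∀ y ∈ F,
        contractRight (Q := (0 : QuadraticForm ℂ V)) x d * CliffordAlgebra.ι 0 y
          = d y • x := by
      intro d y hy
      have h2 := contractRight_mul_ι (Q := (0 : QuadraticForm ℂ V)) (d := d) y x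
      rw [h y hy, map_zero, LinearMap.zero_apply] at h2
      exact ((sub_eq_zero.mp h2.symm).symm)
    have hd0 : ∀ d : Module.Dual ℂ V,
        contractRight (Q := (0 : QuadraticForm ℂ V)) x d = 0 := by
      intro d
      have hsum := Submodule.finrank_sup_add_finrank_inf_eq F (LinearMap.ker d)
      have hker := LinearMap.finrank_range_add_finrank_ker d
      have hr1 : Module.finrank ℂ (LinearMap.range d) ≤ 1 := by
        simpa using Submodule.finrank_le (LinearMap.range d)
      have hsup : Module.finrank ℂ ↥(F ⊔ LinearMap.ker d) ≤ Module.finrank ℂ V :=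
        Submodule.finrank_le _
      have hF'k : k < Module.finrank ℂ ↥(F ⊓ LinearMap.ker d) := by omega
      refine ih (F ⊓ LinearMap.ker d) hF'k _ (contract_mem_pow k x hx d) ?_
      rintro y ⟨hyF, hyk⟩
      rw [key d y hyF, LinearMap.mem_ker.mp hyk, zero_smul]
    obtain ⟨⟨y, hy⟩, hy0⟩ : ∃ v : F, v ≠ 0 := by
      have : 0 < Module.finrank ℂ F := by omega
      rw [Module.finrank_pos_iff] at this
      exact exists_ne 0
    have hxy : ∀ d : Module.Dual ℂ V, d y • x = 0 := by
      intro d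
      rw [← key d y hy, hd0, zero_mul]
    by_contra hx0
    have : ∀ d : Module.Dual ℂ V, d y = 0 := fun d =>
      (smul_eq_zero.mp (hxy d)).resolve_right hx0
    have := (Module.forall_dual_apply_eq_zero_iff ℂ y).mp this
    exact hy0 (by simpa [Submodule.mk_eq_zero] using this)
end

section
/- Let V be an n-dimensional ℂ-vector space, {F_j}_{j∈J} a finite family of subspaces of V, and F = Σ_j F_j their sum. Assume dim F = i ≤ k and ℰ ∈ Λ^i F is nonzero. Then the intersection over j of the annihilator spaces {x ∈ Λ^k V : x ∧ y = 0 for all y ∈ F_j} equals {x ∈ Λ^k V : x ∧ y = 0 for all y ∈ F}, and this space equals ℰ ∧ Λ^{k−i} V. -/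
/-!
Annihilating every `F_j` is a linear condition on `y`, hence the same as annihilating their sum.
For the second equality fix a basis `f_1, …, f_i` of `F` and functionals `d_s` on `V` with
`d_s (f_t) = δ_st`. If `x ∧ f_t = 0`, contracting with `d_t` gives `x = (x ⌊ d_t) ∧ f_t`, and
`x ⌊ d_t` still annihilates the other `f_s`; peeling off the `f_t` one at a time writes
`x = b ∧ f_1 ∧ ⋯ ∧ f_i`. Conversely `f_1 ∧ ⋯ ∧ f_i ∧ y = 0` for `y ∈ F` since `dim F = i`.
Applied with `k = i`, this shows that `ℰ` is a nonzero multiple of `f_1 ∧ ⋯ ∧ f_i`.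
-/

open ExteriorAlgebra

theorem Submodule.exists_dual_apply_basis {K V : Type*} [Field K] [AddCommGroup V] [Module K V]
    {F : Submodule K V} {ι : Type*} [DecidableEq ι]
    (b : Module.Basis ι K F) :
    ∃ d : ι → Module.Dual K V, ∀ s t, d s (b t) = if s = t then 1 else 0 := by
  choose d hd using fun s => LinearMap.exists_extend (b.coord s)
  refine ⟨d, fun s t => ?_⟩
  rw [← F.subtype_apply, ← LinearMap.comp_apply, hd, Module.Basis.coord_apply,
    Module.Basis.repr_self, Finsupp.single_apply]
  exact if_congr eq_comm rfl rfl

namespace ExteriorAlgebra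

section CommRing

variable {R M : Type*} [CommRing R] [AddCommGroup M] [Module R M]

variable (R) in
def wedgeAnnihilator (k : ℕ) (W : Submodule R M) : Submodule R (ExteriorAlgebra R M) where
  carrier := {x | x ∈ ⋀[R]^k M ∧ ∀ y ∈ W, x * ι R y = 0}
  add_mem' hx hy :=
    ⟨add_mem hx.1 hy.1, fun y hyW => by rw [add_mul, hx.2 y hyW, hy.2 y hyW, add_zero]⟩
  zero_mem' := ⟨zero_mem _, fun _ _ => zero_mul _⟩
  smul_mem' c x hx :=
    ⟨Submodule.smul_mem _ c hx.1, fun y hyW => by rw [smul_mul_assoc, hx.2 y hyW, smul_zero]⟩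

theorem iInf_wedgeAnnihilator {J : Type*} [Nonempty J] (k : ℕ) (W : J → Submodule R M) :
    ⨅ j, wedgeAnnihilator R k (W j) = wedgeAnnihilator R k (⨆ j, W j) := by
  ext x
  simp only [Submodule.mem_iInf]
  refine ⟨fun h => ⟨(h (Classical.arbitrary J)).1, fun y hy => ?_⟩,
    fun h j => ⟨h.1, fun y hy => h.2 y (le_iSup W j hy)⟩⟩
  have hker : (⨆ j, W j) ≤ LinearMap.ker ((LinearMap.mulLeft R x) ∘ₗ ι R) :=
    iSup_le fun j y hy => (h j).2 y hy
  exact hker hy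

theorem ι_mul_eq_neg_one_pow_smul {m : ℕ} {z : ExteriorAlgebra R M} (hz : z ∈ ⋀[R]^m M)
    (v : M) : ι R v * z = ((-1 : R) ^ m) • (z * ι R v) := by
  induction hz using Submodule.pow_induction_on_left' with
  | algebraMap r => rw [pow_zero, one_smul, Algebra.commutes]
  | add x y i hx hy ihx ihy => rw [mul_add, add_mul, ihx, ihy, smul_add]
  | mem_mul a ha i x hx ih =>
    obtain ⟨w, rfl⟩ := ha
    have anticomm : ι R v * ι R w = -(ι R w * ι R v) :=
      eq_neg_of_add_eq_zero_left (ι_add_mul_swap v w)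
    rw [← mul_assoc, anticomm, neg_mul, mul_assoc, ih, mul_smul_comm, ← neg_smul, pow_succ,
      mul_neg_one, mul_assoc]

theorem mul_eq_neg_one_pow_smul {l m : ℕ} {w z : ExteriorAlgebra R M} (hw : w ∈ ⋀[R]^l M)
    (hz : z ∈ ⋀[R]^m M) : z * w = ((-1 : R) ^ (m * l)) • (w * z) := by
  induction hw using Submodule.pow_induction_on_left' with
  | algebraMap r => rw [Nat.mul_zero, pow_zero, one_smul, Algebra.commutes]
  | add x y i hx hy ihx ihy => rw [mul_add, add_mul, ihx, ihy, smul_add]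
  | mem_mul a ha i x hx ih =>
    obtain ⟨u, rfl⟩ := ha
    have hzu : z * ι R u = ((-1 : R) ^ m) • (ι R u * z) := by
      rw [ι_mul_eq_neg_one_pow_smul hz u, smul_smul, ← pow_add,
        Even.neg_one_pow (Even.add_self m), one_smul]
    rw [← mul_assoc, hzu, smul_mul_assoc, mul_assoc, ih, mul_smul_comm, smul_smul, ← pow_add,
      mul_assoc, Nat.mul_succ, add_comm]

theorem contractRight_mem_exteriorPower {m : ℕ} {z : ExteriorAlgebra R M} (hz : z ∈ ⋀[R]^m M)
    (d : Module.Dual R M) : CliffordAlgebra.contractRight z d ∈ ⋀[R]^(m - 1) M := by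
  induction hz using Submodule.pow_induction_on_right' with
  | algebraMap r => simp [CliffordAlgebra.contractRight_algebraMap]
  | add x y i hx hy ihx ihy => simpa only [map_add, LinearMap.add_apply] using add_mem ihx ihy
  | mul_mem i x hx ih a ha =>
    obtain ⟨u, rfl⟩ := ha
    rw [CliffordAlgebra.contractRight_mul_ι]
    refine sub_mem (Submodule.smul_mem _ _ (by simpa using hx)) ?_
    cases i with
    | zero =>
      obtain ⟨r, rfl⟩ := Submodule.mem_one.mp (by simpa using hx)
      simp [CliffordAlgebra.contractRight_algebraMap]
    | succ j =>
      simpa using SetLike.mul_mem_graded ih (show ι R u ∈ ⋀[R]^1 M by simp)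

theorem contractRight_mul_ι_eq_zero {x : ExteriorAlgebra R M} {v : M} {d : Module.Dual R M}
    (hx : x * ι R v = 0) (hd : d v = 0) : CliffordAlgebra.contractRight x d * ι R v = 0 := by
  have h := CliffordAlgebra.contractRight_mul_ι (d := d) v x
  rw [hx, map_zero, LinearMap.zero_apply, hd, zero_smul, zero_sub] at h
  exact neg_eq_zero.mp h.symm

theorem eq_contractRight_mul_ι {x : ExteriorAlgebra R M} {v : M} {d : Module.Dual R M}
    (hx : x * ι R v = 0) (hd : d v = 1) : x = CliffordAlgebra.contractRight x d * ι R v := by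
  have h := CliffordAlgebra.contractRight_mul_ι (d := d) v x
  rw [hx, map_zero, LinearMap.zero_apply, hd, one_smul] at h
  exact sub_eq_zero.mp h.symm

theorem ιMulti_succ_apply_last {m : ℕ} (v : Fin (m + 1) → M) :
    ιMulti R (m + 1) v = ιMulti R m (Fin.init v) * ι R (v (Fin.last m)) := by
  rw [ιMulti_apply, ιMulti_apply, List.ofFn_succ', List.prod_concat]
  rfl

theorem exists_eq_mul_ιMulti_of_mul_ι_eq_zero {m : ℕ} (f : Fin m → M)
    (d : Fin m → Module.Dual R M) (hfd : ∀ s t, d s (f t) = if s = t then 1 else 0)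
    {k : ℕ} {x : ExteriorAlgebra R M} (hx : x ∈ ⋀[R]^k M) (hxf : ∀ t, x * ι R (f t) = 0) :
    ∃ b ∈ ⋀[R]^(k - m) M, x = b * ιMulti R m f := by
  induction m generalizing k x with
  | zero => exact ⟨x, hx, by simp⟩
  | succ m ih =>
    set x' := CliffordAlgebra.contractRight x (d (Fin.last m))
    have hx'f : ∀ t, x' * ι R (Fin.init f t) = 0 := fun t =>
      contractRight_mul_ι_eq_zero (hxf _) (by simp [Fin.init, hfd, (Fin.castSucc_lt_last t).ne'])
    obtain ⟨b, hb, hx'⟩ := ih (Fin.init f) (Fin.init d) (fun s t => by simp [Fin.init, hfd])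
      (contractRight_mem_exteriorPower hx _) hx'f
    refine ⟨b, by rwa [Nat.sub_sub, add_comm] at hb, ?_⟩
    rw [ιMulti_succ_apply_last, ← mul_assoc, ← hx']
    exact eq_contractRight_mul_ι (hxf _) (by simp [hfd])

end CommRing

section Field

variable {K V : Type*} [Field K] [AddCommGroup V] [Module K V]

theorem ιMulti_eq_zero_of_finrank_lt {F : Submodule K V} [Module.Finite K F] {m : ℕ}
    {g : Fin m → V} (hg : ∀ t, g t ∈ F) (hm : Module.finrank K F < m) : ιMulti K m g = 0 := by
  refine AlternatingMap.map_linearDependent _ _ fun hli => hm.not_ge ?_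
  have hliF : LinearIndependent K fun t => (⟨g t, hg t⟩ : F) :=
    LinearIndependent.of_comp F.subtype hli
  simpa using hliF.fintype_card_le_finrank

theorem ιMulti_mul_ι_eq_zero {F : Submodule K V} [Module.Finite K F] {m : ℕ} {g : Fin m → V}
    (hg : ∀ t, g t ∈ F) (hm : Module.finrank K F ≤ m) {y : V} (hy : y ∈ F) :
    ιMulti K m g * ι K y = 0 := by
  have hgy : ∀ t, Fin.snoc (α := fun _ => V) g y t ∈ F := Fin.lastCases (by simpa) (by simpa)
  simpa only [ιMulti_succ_apply_last, Fin.init_snoc, Fin.snoc_last] using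
    ιMulti_eq_zero_of_finrank_lt hgy (by omega)

theorem ιMulti_mem_wedgeAnnihilator {F : Submodule K V} [Module.Finite K F]
    {g : Fin (Module.finrank K F) → V} (hg : ∀ t, g t ∈ F) :
    ιMulti K _ g ∈ wedgeAnnihilator K (Module.finrank K F) F :=
  ⟨ιMulti_range K _ (Set.mem_range_self g), fun _ hy => ιMulti_mul_ι_eq_zero hg le_rfl hy⟩

theorem wedgeAnnihilator_eq_map_mulLeft_ιMulti {F : Submodule K V} {r k : ℕ}
    (b : Module.Basis (Fin r) K F) (hrk : r ≤ k) :
    wedgeAnnihilator K k F =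
      (⋀[K]^(k - r) V).map (LinearMap.mulLeft K (ιMulti K r fun t => (b t : V))) := by
  have : Module.Finite K F := Module.Finite.of_basis b
  have hr : Module.finrank K F = r := by simpa using Module.finrank_eq_card_basis b
  set W := ιMulti K r fun t => (b t : V)
  have hW : W ∈ ⋀[K]^r V := ιMulti_range K r (Set.mem_range_self _)
  have hbF : ∀ t, (b t : V) ∈ F := fun t => (b t).2
  ext x
  constructor
  · rintro ⟨hx, hxF⟩
    obtain ⟨d, hd⟩ := F.exists_dual_apply_basis b
    obtain ⟨z, hz, rfl⟩ := exists_eq_mul_ιMulti_of_mul_ι_eq_zero _ d hd hx fun t => hxF _ (hbF t)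
    refine ⟨((-1 : K) ^ ((k - r) * r)) • z, Submodule.smul_mem _ _ hz, ?_⟩
    rw [LinearMap.mulLeft_apply, mul_smul_comm, ← mul_eq_neg_one_pow_smul hW hz]
  · rintro ⟨z, hz, rfl⟩
    refine ⟨by simpa [hrk] using SetLike.mul_mem_graded hW hz, fun y hy => ?_⟩
    rw [LinearMap.mulLeft_apply, mul_eq_neg_one_pow_smul hz hW, smul_mul_assoc, mul_assoc,
      ιMulti_mul_ι_eq_zero hbF hr.le hy, mul_zero, smul_zero]

theorem wedgeAnnihilator_eq_map_mulLeft {F : Submodule K V} [Module.Finite K F] {k : ℕ}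
    (hk : Module.finrank K F ≤ k) {E : ExteriorAlgebra K V}
    (hE : E ∈ wedgeAnnihilator K (Module.finrank K F) F) (hE0 : E ≠ 0) :
    wedgeAnnihilator K k F = (⋀[K]^(k - Module.finrank K F) V).map (LinearMap.mulLeft K E) := by
  let b := Module.finBasis K F
  set W := ιMulti K _ fun t => (b t : V)
  rw [wedgeAnnihilator_eq_map_mulLeft_ιMulti b le_rfl, Nat.sub_self] at hE
  obtain ⟨z, hz, rfl⟩ := hE
  obtain ⟨c, rfl⟩ := Submodule.mem_one.mp (by simpa [exteriorPower] using hz)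
  have hc : c ≠ 0 := by rintro rfl; simp at hE0
  rw [wedgeAnnihilator_eq_map_mulLeft_ιMulti b hk, LinearMap.mulLeft_apply, ← Algebra.commutes,
    ← Algebra.smul_def]
  have hmul : LinearMap.mulLeft K (c • W) = c • LinearMap.mulLeft K W :=
    LinearMap.ext fun _ => smul_mul_assoc c W _
  rw [hmul, Submodule.map_smul _ _ c hc]

end Field

end ExteriorAlgebra

theorem stmt6_general (i k : ℕ) (hik : i ≤ k)
    (V : Type*) [AddCommGroup V] [Module ℂ V] [FiniteDimensional ℂ V]
    (J : Type*) [Nonempty J] (Fj : J → Submodule ℂ V)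
    (F : Submodule ℂ V) (hF : F = ⨆ j, Fj j)
    (hdim : Module.finrank ℂ F = i)
    (E : ExteriorAlgebra ℂ V) (hE : E ≠ 0)
    (hEmem : E ∈ Submodule.span ℂ {z : ExteriorAlgebra ℂ V |
      ∃ g : Fin i → V, (∀ t, g t ∈ F) ∧ z = (List.ofFn fun t => ι ℂ (g t)).prod}) :
    (⋂ j : J, {x : ExteriorAlgebra ℂ V | x ∈ ⋀[ℂ]^k V ∧ ∀ y ∈ Fj j, x * ι ℂ y = 0})
        = {x : ExteriorAlgebra ℂ V | x ∈ ⋀[ℂ]^k V ∧ ∀ y ∈ F, x * ι ℂ y = 0}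
      ∧ {x : ExteriorAlgebra ℂ V | x ∈ ⋀[ℂ]^k V ∧ ∀ y ∈ F, x * ι ℂ y = 0}
        = {x : ExteriorAlgebra ℂ V |
            x ∈ Submodule.map (LinearMap.mulLeft ℂ E) (⋀[ℂ]^(k - i) V)} := by
  subst hdim
  have hEF : E ∈ wedgeAnnihilator ℂ (Module.finrank ℂ F) F := by
    refine Submodule.span_le.mpr ?_ hEmem
    rintro _ ⟨g, hg, rfl⟩
    exact ιMulti_mem_wedgeAnnihilator hg
  refine ⟨?_, congrArg SetLike.coe (wedgeAnnihilator_eq_map_mulLeft hik hEF hE)⟩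
  subst hF
  exact (Submodule.coe_iInf _).symm.trans (congrArg SetLike.coe (iInf_wedgeAnnihilator k Fj))

/-- Let `V` be an `n`-dimensional complex vector space, `{F_j}` a finite family
of subspaces with sum `F`, `dim F = i ≤ k`, and let `ℰ` be a nonzero element of
`Λ^i F` (the span, inside `Λ^i V`, of the `i`-fold wedges of elements of `F`).
Then `∩_j {x ∈ Λ^k V : x ∧ y = 0 ∀ y ∈ F_j} = {x ∈ Λ^k V : x ∧ y = 0 ∀ y ∈ F}`,
and this space equals `ℰ ∧ Λ^{k-i} V`. -/
theorem stmt6 (n i k : ℕ) (hik : i ≤ k) (hkn : k ≤ n)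
    (V : Type*) [AddCommGroup V] [Module ℂ V] [FiniteDimensional ℂ V]
    (hV : Module.finrank ℂ V = n)
    (J : Type*) [Fintype J] [Nonempty J] (Fj : J → Submodule ℂ V)
    (F : Submodule ℂ V) (hF : F = ⨆ j, Fj j)
    (hdim : Module.finrank ℂ F = i)
    (E : ExteriorAlgebra ℂ V) (hE : E ≠ 0)
    (hEmem : E ∈ Submodule.span ℂ {z : ExteriorAlgebra ℂ V |
      ∃ g : Fin i → V, (∀ t, g t ∈ F) ∧ z = (List.ofFn fun t => ι ℂ (g t)).prod}) :
    (⋂ j : J, {x : ExteriorAlgebra ℂ V | x ∈ ⋀[ℂ]^k V ∧ ∀ y ∈ Fj j, x * ι ℂ y = 0})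
        = {x : ExteriorAlgebra ℂ V | x ∈ ⋀[ℂ]^k V ∧ ∀ y ∈ F, x * ι ℂ y = 0}
      ∧ {x : ExteriorAlgebra ℂ V | x ∈ ⋀[ℂ]^k V ∧ ∀ y ∈ F, x * ι ℂ y = 0}
        = {x : ExteriorAlgebra ℂ V |
            x ∈ Submodule.map (LinearMap.mulLeft ℂ E) (⋀[ℂ]^(k - i) V)} :=
  stmt6_general i k hik V J Fj F hF hdim E hE hEmem
end

section
/- On ℂⁿ with coordinates z_1,…,z_n, let v_t = z_t ∂/∂z_t and let W^k be the span of all v_{t_1} ∧ … ∧ v_{t_k} with t_1 < … < t_k. For I = (m_1,…,m_n) ∈ ℤⁿ set χ^I = z_1^{m_1}⋯z_n^{m_n}. A nonzero meromorphic k-vector field χ^I · w with w ∈ W^k extends holomorphically to all of ℂⁿ if and only if m_t ≥ −1 for all t, the set S = {t : m_t = −1} has at most k elements, and w ∈ (∧_{t∈S} v_t) ∧ W^{k−#S}. -/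
/-- On `ℂⁿ`, write `v_t = z_t ∂/∂z_t` and `v_S = ∧_{t ∈ S} v_t` for
`S ⊆ {1,…,n}` with `#S = k`; the `v_S` form a basis of `W^k`.  A `k`-vector
field `w = Σ_S a_S v_S ∈ W^k` gives the meromorphic field
`χ^I · w`, whose coefficient on the standard basis vector `∂/∂z_S` is the
Laurent monomial `a_S · z^{I + 1_S}`; it extends holomorphically to `ℂⁿ` iff
every such monomial with `a_S ≠ 0` has nonnegative exponents.

Claim: for `w ≠ 0`, `χ^I · w` is holomorphic on `ℂⁿ` iff `I_t ≥ -1` for all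
`t`, the set `S₀ = {t : I_t = -1}` has at most `k` elements, and
`w ∈ (∧_{t ∈ S₀} v_t) ∧ W^{k - #S₀}`, i.e. every `S` with `a_S ≠ 0` contains
`S₀`. -/
theorem stmt8 (n k : ℕ) (hk : k ≤ n) (I : Fin n → ℤ)
    (a : Finset (Fin n) → ℂ) (hw : ∃ S : Finset (Fin n), S.card = k ∧ a S ≠ 0) :
    (∀ S : Finset (Fin n), S.card = k → a S ≠ 0 →
        ∀ t : Fin n, 0 ≤ I t + (if t ∈ S then 1 else 0))
      ↔ ((∀ t, -1 ≤ I t) ∧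
          (Finset.univ.filter (fun t : Fin n => I t = -1)).card ≤ k ∧
          (∀ S : Finset (Fin n), S.card = k → a S ≠ 0 →
            Finset.univ.filter (fun t : Fin n => I t = -1) ⊆ S)) := by
  obtain ⟨S₁, hS₁, ha₁⟩ := hw
  constructor
  · intro h
    have hsub : ∀ S : Finset (Fin n), S.card = k → a S ≠ 0 →
        Finset.univ.filter (fun t : Fin n => I t = -1) ⊆ S := by
      intro S hS haS t ht
      simp only [Finset.mem_filter] at ht
      have := h S hS haS t
      by_contra htS
      simp [htS, ht.2] at this
    refine ⟨?_, ?_, hsub⟩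
    · intro t
      have := h S₁ hS₁ ha₁ t
      by_cases htS : t ∈ S₁ <;> simp [htS] at this <;> omega
    · calc (Finset.univ.filter (fun t : Fin n => I t = -1)).card
          ≤ S₁.card := Finset.card_le_card (hsub S₁ hS₁ ha₁)
        _ = k := hS₁
  · rintro ⟨h1, _, h3⟩ S hS haS t
    by_cases ht : I t = -1
    · have : t ∈ S := h3 S hS haS (by simp [ht])
      simp [this, ht]
    · have := h1 t
      by_cases htS : t ∈ S <;> simp [htS] <;> omega
end
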